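/- arXiv:1102.0862 — 2 statements merged into one kernel-verified Lean document; each statement's English description precedes it below -/
import Mathlib

section
/- For a binary relation θ ⊆ X×Y between finite sets, let Φ₂(θ) be the PBR on (X,Y) whose edges are exactly (x^(d),y^(c)) and (y^(c),x^(d)) for all (x,y) ∈ θ. Then: (i) Φ₂ of the equality relation on X equals ε_X; (ii) for all θ ⊆ X×Y and η ⊆ Y×Z one has Φ₂(η∘θ) = Φ₂(η)∘Φ₂(θ), where η∘θ = {(x,z) : ∃y, (x,y) ∈ θ and (y,z) ∈ η} is relation composition and the right-hand composition is PBR composition; (iii) Φ₂ is injective on each hom set. Hence Φ₂ is a faithful functor from the category of binary relations to the category of PBRs. -/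
namespace PBRPaper

/-- A partitioned binary relation (PBR) on `(X, Y)`: a binary relation on
the disjoint union `X ⊕ Y`. -/
abbrev PBR (X Y : Type) : Type := Set ((X ⊕ Y) × (X ⊕ Y))

variable {X Y Z : Type}

/-- The inclusion of `X ⊕ Y` into `X ⊕ Y ⊕ Z`. -/
def ι₁ : X ⊕ Y → X ⊕ Y ⊕ Z := Sum.elim Sum.inl fun y => Sum.inr (Sum.inl y)

/-- The inclusion of `Y ⊕ Z` into `X ⊕ Y ⊕ Z`. -/
def ι₂ : Y ⊕ Z → X ⊕ Y ⊕ Z :=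
  Sum.elim (fun y => Sum.inr (Sum.inl y)) fun z => Sum.inr (Sum.inr z)

/-- The inclusion of `X ⊕ Z` into `X ⊕ Y ⊕ Z`. -/
def ι₀ : X ⊕ Z → X ⊕ Y ⊕ Z := Sum.elim Sum.inl fun z => Sum.inr (Sum.inr z)

/-- Labeled edges in the ambient `X ⊕ Y ⊕ Z`: label `false` means
"an edge of `α`", label `true` means "an edge of `β`". -/
def EdgeMem (α : PBR X Y) (β : PBR Y Z)
    (e : Bool × (X ⊕ Y ⊕ Z) × (X ⊕ Y ⊕ Z)) : Prop :=
  if e.1 then ∃ p ∈ β, ι₂ p.1 = e.2.1 ∧ ι₂ p.2 = e.2.2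
  else ∃ p ∈ α, ι₁ p.1 = e.2.1 ∧ ι₁ p.2 = e.2.2

/-- An `(α,β)`-connected sequence: a nonempty list of labeled edges of `α`/`β`,
no two successive edges from the same PBR, endpoints matching up. -/
def IsConnSeq (α : PBR X Y) (β : PBR Y Z)
    (L : List (Bool × (X ⊕ Y ⊕ Z) × (X ⊕ Y ⊕ Z))) : Prop :=
  L ≠ [] ∧ (∀ e ∈ L, EdgeMem α β e) ∧
    L.Chain' fun e f => e.1 ≠ f.1 ∧ e.2.2 = f.2.1

/-- `L` is an `(α,β)`-connected sequence connecting `a` to `b`. -/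
def ConnectsVia (α : PBR X Y) (β : PBR Y Z)
    (L : List (Bool × (X ⊕ Y ⊕ Z) × (X ⊕ Y ⊕ Z))) (a b : X ⊕ Z) : Prop :=
  IsConnSeq α β L ∧ L.head?.map (fun e => e.2.1) = some (ι₀ a) ∧
    L.getLast?.map (fun e => e.2.2) = some (ι₀ b)

/-- Composition of partitioned binary relations. -/
def comp (β : PBR Y Z) (α : PBR X Y) : PBR X Z :=
  {p | ∃ L, ConnectsVia α β L p.1 p.2}

/-- The identity PBR `ε_X`, consisting of all edges `(x^(d), x^(c))`
and `(x^(c), x^(d))`. -/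
def eps (X : Type) : PBR X X :=
  {p | ∃ x : X, p = (Sum.inl x, Sum.inr x) ∨ p = (Sum.inr x, Sum.inl x)}

/-- A labeled edge is `(α,β)`-frothy if it is an edge of the corresponding PBR
occurring in no `(α,β)`-connected sequence connecting two elements of `X ⊕ Z`. -/
def IsFrothy (α : PBR X Y) (β : PBR Y Z)
    (e : Bool × (X ⊕ Y ⊕ Z) × (X ⊕ Y ⊕ Z)) : Prop :=
  EdgeMem α β e ∧ ∀ L a b, ConnectsVia α β L a b → e ∉ L

/-- An `(α,β)`-frothy cycle. -/
def IsFrothyCycle (α : PBR X Y) (β : PBR Y Z)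
    (L : List (Bool × (X ⊕ Y ⊕ Z) × (X ⊕ Y ⊕ Z))) : Prop :=
  IsConnSeq α β L ∧ 2 ≤ L.length ∧
    L.getLast?.map (fun e => e.2.2) = L.head?.map (fun e => e.2.1) ∧
    L.head?.map (fun e => e.1) ≠ L.getLast?.map (fun e => e.1) ∧
    ∀ e ∈ L, IsFrothy α β e

/-- The type of `(α,β)`-frothy cycles. -/
def FrothyCycles (α : PBR X Y) (β : PBR Y Z) :=
  {L : List (Bool × (X ⊕ Y ⊕ Z) × (X ⊕ Y ⊕ Z)) // IsFrothyCycle α β L}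

/-- `𝔣((α,β))`: the number of equivalence classes of `(α,β)`-frothy cycles,
where the equivalence is generated by elementary equivalence (sharing a common
edge of the same PBR); note that naive equivalence (cyclic permutation) is
subsumed, since a cycle and any of its cyclic permutations share all edges. -/
noncomputable def fPBR (α : PBR X Y) (β : PBR Y Z) : ℕ :=
  Nat.card (Quot fun L L' : FrothyCycles α β => ∃ e, e ∈ L.1 ∧ e ∈ L'.1)

/-- The map `Φ₂`: the edges of `Φ₂(θ)` are exactly `(x^(d), y^(c))` and
`(y^(c), x^(d))` for `(x, y) ∈ θ`. -/
def Phi2 {X Y : Type} (θ : Set (X × Y)) : PBR X Y :=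
  {p | ∃ q ∈ θ, p = (Sum.inl q.1, Sum.inr q.2) ∨ p = (Sum.inr q.2, Sum.inl q.1)}

/-- Usual composition of binary relations. -/
def relComp {X Y Z : Type} (η : Set (Y × Z)) (θ : Set (X × Y)) : Set (X × Z) :=
  {p | ∃ y, (p.1, y) ∈ θ ∧ (y, p.2) ∈ η}

/-!
The edges of `Φ₂ θ` join `X` to `Y` and those of `Φ₂ η` join `Y` to `Z`. Two consecutive edges
of a connected sequence come from different PBRs, so they meet in `Y` and the second one ends in
`X` or `Z`, where no edge of the other PBR starts. Hence a connected sequence between points of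
`X ⊕ Z` is a pair of edges `x → y → z` or `z → y → x`, i.e. an edge of `Φ₂ (η ∘ θ)`.
-/

theorem connectsVia_pair_iff {α : PBR X Y} {β : PBR Y Z}
    (e₁ e₂ : Bool × (X ⊕ Y ⊕ Z) × (X ⊕ Y ⊕ Z)) (a b : X ⊕ Z) :
    ConnectsVia α β [e₁, e₂] a b ↔ EdgeMem α β e₁ ∧ EdgeMem α β e₂ ∧
      e₁.1 ≠ e₂.1 ∧ e₁.2.2 = e₂.2.1 ∧ e₁.2.1 = ι₀ a ∧ e₂.2.2 = ι₀ b := by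
  -- `IsConnSeq` is phrased with `List.Chain'`, a deprecated synonym of `List.IsChain`.
  change (_ ∧ _ ∧ List.IsChain _ _) ∧ _ ↔ _
  simp [and_assoc]

section Phi2

open Sum

variable {θ : Set (X × Y)} {η : Set (Y × Z)}

@[simp]
theorem inl_inr_mem_phi2 {x : X} {y : Y} : (inl x, inr y) ∈ Phi2 θ ↔ (x, y) ∈ θ := by
  simp [Phi2]

@[simp]
theorem inr_inl_mem_phi2 {x : X} {y : Y} : (inr y, inl x) ∈ Phi2 θ ↔ (x, y) ∈ θ := by
  simp [Phi2]

theorem phi2_injective : Function.Injective (Phi2 (X := X) (Y := Y)) := by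
  intro θ θ' h
  ext ⟨x, y⟩
  rw [← inl_inr_mem_phi2, h, inl_inr_mem_phi2]

theorem phi2_diagonal : Phi2 {p : X × X | p.1 = p.2} = eps X := by
  ext p
  simp [Phi2, eps]

theorem edgeMem_false_phi2 (β : PBR Y Z) (u v : X ⊕ Y ⊕ Z) :
    EdgeMem (Phi2 θ) β (false, u, v) ↔ ∃ x y, (x, y) ∈ θ ∧
      (u = inl x ∧ v = inr (inl y) ∨ u = inr (inl y) ∧ v = inl x) := by
  aesop (add simp [EdgeMem, Phi2, ι₁])

theorem edgeMem_true_phi2 (α : PBR X Y) (u v : X ⊕ Y ⊕ Z) :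
    EdgeMem α (Phi2 η) (true, u, v) ↔ ∃ y z, (y, z) ∈ η ∧
      (u = inr (inl y) ∧ v = inr (inr z) ∨ u = inr (inr z) ∧ v = inr (inl y)) := by
  aesop (add simp [EdgeMem, Phi2, ι₂])

theorem exists_endpoint_eq_inr_inl_of_edgeMem_phi2 {e : Bool × (X ⊕ Y ⊕ Z) × (X ⊕ Y ⊕ Z)}
    (h : EdgeMem (Phi2 θ) (Phi2 η) e) : ∃ y : Y, e.2.1 = inr (inl y) ∨ e.2.2 = inr (inl y) := by
  obtain ⟨_ | _, u, v⟩ := e <;> simp only [edgeMem_false_phi2, edgeMem_true_phi2] at h <;> aesop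

theorem ι₀_ne_inr_inl (a : X ⊕ Z) (y : Y) : ι₀ a ≠ (inr (inl y) : X ⊕ Y ⊕ Z) := by
  cases a <;> simp [ι₀]

theorem not_isConnSeq_phi2_of_length_three (e₁ e₂ e₃ : Bool × (X ⊕ Y ⊕ Z) × (X ⊕ Y ⊕ Z))
    (L : List (Bool × (X ⊕ Y ⊕ Z) × (X ⊕ Y ⊕ Z))) :
    ¬ IsConnSeq (Phi2 θ) (Phi2 η) (e₁ :: e₂ :: e₃ :: L) := by
  rintro ⟨-, hmem, hchain⟩
  obtain ⟨⟨h₁₂, hv₁⟩, ⟨h₂₃, hv₂⟩, -⟩ := List.isChain_cons_cons.1 hchain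
  have h₁ := hmem e₁ (by simp)
  have h₂ := hmem e₂ (by simp)
  have h₃ := hmem e₃ (by simp)
  obtain ⟨_ | _, u₁, v₁⟩ := e₁ <;> obtain ⟨_ | _, u₂, v₂⟩ := e₂ <;>
    obtain ⟨_ | _, u₃, v₃⟩ := e₃ <;>
    simp only [edgeMem_false_phi2, edgeMem_true_phi2] at h₁ h₂ h₃ <;> aesop

theorem length_eq_two_of_connectsVia_phi2 {L : List (Bool × (X ⊕ Y ⊕ Z) × (X ⊕ Y ⊕ Z))}
    {a b : X ⊕ Z} (h : ConnectsVia (Phi2 θ) (Phi2 η) L a b) : L.length = 2 := by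
  match L, h with
  | [], h => exact absurd rfl h.1.1
  | [e], ⟨⟨_, hmem, _⟩, ha, hb⟩ =>
    simp only [List.head?_cons, List.getLast?_singleton, Option.map_some, Option.some.injEq]
      at ha hb
    obtain ⟨y, hy | hy⟩ := exists_endpoint_eq_inr_inl_of_edgeMem_phi2 (hmem e (by simp))
    exacts [(ι₀_ne_inr_inl a y (ha ▸ hy)).elim, (ι₀_ne_inr_inl b y (hb ▸ hy)).elim]
  | [_, _], _ => rfl
  | _ :: _ :: _ :: _, h => exact absurd h.1 (not_isConnSeq_phi2_of_length_three _ _ _ _)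

theorem phi2_relComp (θ : Set (X × Y)) (η : Set (Y × Z)) :
    Phi2 (relComp η θ) = comp (Phi2 η) (Phi2 θ) := by
  ext ⟨a, b⟩
  constructor
  · rintro ⟨⟨x, z⟩, ⟨y, hθ, hη⟩, h | h⟩ <;> obtain ⟨rfl, rfl⟩ := Prod.mk.inj h
    · refine ⟨[(false, inl x, inr (inl y)), (true, inr (inl y), inr (inr z))], ?_⟩
      simp [connectsVia_pair_iff, edgeMem_false_phi2, edgeMem_true_phi2, ι₀, hθ, hη]
    · refine ⟨[(true, inr (inr z), inr (inl y)), (false, inr (inl y), inl x)], ?_⟩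
      simp [connectsVia_pair_iff, edgeMem_false_phi2, edgeMem_true_phi2, ι₀, hθ, hη]
  · rintro ⟨L, hL⟩
    obtain ⟨e₁, e₂, rfl⟩ := List.length_eq_two.1 (length_eq_two_of_connectsVia_phi2 hL)
    rw [connectsVia_pair_iff] at hL
    obtain ⟨_ | _, u₁, v₁⟩ := e₁ <;> obtain ⟨_ | _, u₂, v₂⟩ := e₂ <;>
      aesop (add simp [edgeMem_false_phi2, edgeMem_true_phi2, ι₀, relComp])

end Phi2

theorem phi2_faithful_functor_general (X Y Z : Type) :
    Phi2 {p : X × X | p.1 = p.2} = eps X ∧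
    (∀ (θ : Set (X × Y)) (η : Set (Y × Z)),
      Phi2 (relComp η θ) = comp (Phi2 η) (Phi2 θ)) ∧
    Function.Injective (Phi2 (X := X) (Y := Y)) :=
  ⟨phi2_diagonal, phi2_relComp, phi2_injective⟩

/-- `Φ₂` is a faithful functor from binary relations to PBRs: it sends the
equality relation to the identity PBR, respects composition, and is injective
on each hom set. -/
theorem phi2_faithful_functor (X Y Z : Type) [Fintype X] [Fintype Y] [Fintype Z] :
    Phi2 {p : X × X | p.1 = p.2} = eps X ∧
    (∀ (θ : Set (X × Y)) (η : Set (Y × Z)),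
      Phi2 (relComp η θ) = comp (Phi2 η) (Phi2 θ)) ∧
    Function.Injective (Phi2 (X := X) (Y := Y)) :=
  phi2_faithful_functor_general X Y Z

end PBRPaper
end

section
/- For pairs (X₁,X₂) and (Y₁,Y₂) of finite sets with X₁ ⊆ X₂ and Y₁ ⊆ Y₂, call а PBR α on (X₂,Y₂) an admissible oriented Brauer diagram from (X₁,X₂) to (Y₁,Y₂) if every element of X₂ ⊕ Y₂ appears in exactly one edge of α and every edge (a,b) of α satisfies: a lies in X₁ inside the domain copy or in Y₂∖Y₁ inside the codomain copy, and b lies in Y₁ inside the codomain copy or in X₂∖X₁ inside the domain copy. Let ε̌_{(X₁,X₂)} be the PBR on (X₂,X₂) with edges (x^(d),x^(c)) for x ∈ X₁ and (x^(c),x^(d)) for x ∈ X₂∖X₁. Then: (i) if α is admissible from (X₁,X₂) to (Y₁,Y₂) and β is admissible from (Y₁,Y₂) to (Z₁,Z₂), then β∘α is admissible from (X₁,X₂) to (Z₁,Z₂); (ii) ε̌_{(X₁,X₂)} is admissible from (X₁,X₂) to itself, α∘ε̌_{(X₁,X₂)} = α = ε̌_{(Y₁,Y₂)}∘α, and 𝔣((ε̌_{(X₁,X₂)},α))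 = 0 = 𝔣((α,ε̌_{(Y₁,Y₂)})). Hence admissible oriented Brauer diagrams paired with elements of ℕ₀, under the deformed composition (β,m)⋄(α,k) = (β∘α, m+k+𝔣((α,β))), form a category (the oriented Brauer category). -/
/-!
Work in the ambient set `X ⊕ Y ⊕ Z`. Admissibility says that each point of `X ⊕ Y` starts (if it
`IsSource`) or ends (otherwise) exactly one edge of `α`, likewise for `β`, and at a middle point
`y ∈ Y` the two diagrams disagree on whether `y` is a source. Hence every ambient point starts at
most one and ends at most one edge of the pair, consecutive edges automatically come from
different diagrams, and connected sequences are walks along the relation "`f` starts where `e`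
ends", which is injective in both directions. A walk from a source point of `X ⊕ Z` never
returns, so by finiteness it stops, necessarily at a target point of `X ⊕ Z`, and determinism
makes that end unique: `β ∘ α` is admissible.
Against `ε̌`, each edge of `α` extends by at most one edge of `ε̌` at either end to a connected
sequence. This gives `α ⊆ α ∘ ε̌`, hence equality since both sides are admissible, and shows that
no edge is frothy.
-/

namespace PBRPaper

variable {X Y Z : Type}

variable {X₂ Y₂ : Type} in
/-- An admissible oriented Brauer diagram from `(X₁,X₂)` to `(Y₁,Y₂)`: every
element of `X₂ ⊕ Y₂` appears in exactly one edge, every edge starts in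
`X₁ ∪ (Y₂ ∖ Y₁)` and ends in `Y₁ ∪ (X₂ ∖ X₁)`. -/
def Admissible (X₁ : Set X₂) (Y₁ : Set Y₂) (α : PBR X₂ Y₂) : Prop :=
  (∀ s : X₂ ⊕ Y₂, ∃! p, p ∈ α ∧ (s = p.1 ∨ s = p.2)) ∧
  ∀ p ∈ α, Sum.elim (fun x => x ∈ X₁) (fun y => y ∉ Y₁) p.1 ∧
    Sum.elim (fun x => x ∉ X₁) (fun y => y ∈ Y₁) p.2

variable {X₂ : Type} in
/-- The oriented Brauer diagram `ε̌_{(X₁,X₂)}`, with edges `(x^(d),x^(c))` for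
`x ∈ X₁` and `(x^(c),x^(d))` for `x ∈ X₂ ∖ X₁`. -/
def epsCheck (X₁ : Set X₂) : PBR X₂ X₂ :=
  {p | ∃ x : X₂, (x ∈ X₁ ∧ p = (Sum.inl x, Sum.inr x)) ∨
        (x ∉ X₁ ∧ p = (Sum.inr x, Sum.inl x))}

end PBRPaper

namespace Relation

variable {W : Type*} {r : W → W → Prop}

theorem exists_reflTransGen_forall_not_of_leftUnique [Finite W] (hr : Relator.LeftUnique r)
    {a : W} (ha : ∀ b, ¬ r b a) : ∃ b, ReflTransGen r a b ∧ ∀ c, ¬ r b c := by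
  by_contra! h
  choose next hnext using h
  -- a successor map on the finite set of points reachable from `a` is injective, hence
  -- surjective, so `a` itself would have a predecessor
  let step : {b // ReflTransGen r a b} → {b // ReflTransGen r a b} :=
    fun b => ⟨next b b.2, b.2.tail (hnext b b.2)⟩
  have step_injective : Function.Injective step := fun b c hbc => by
    have hbc : next b b.2 = next c c.2 := congrArg Subtype.val hbc
    exact Subtype.ext (hr (hnext b b.2) (hbc ▸ hnext c c.2))
  obtain ⟨b, hb⟩ := Finite.surjective_of_injective step_injective ⟨a, .refl⟩
  have hb : next b b.2 = a := congrArg Subtype.val hb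
  exact ha b (hb ▸ hnext b b.2 :)

theorem eq_of_reflTransGen_of_rightUnique (hr : Relator.RightUnique r) {a b c : W}
    (hab : ReflTransGen r a b) (hac : ReflTransGen r a c) (hb : ∀ d, ¬ r b d)
    (hc : ∀ d, ¬ r c d) : b = c := by
  rcases ReflTransGen.total_of_right_unique hr hab hac with hbc | hcb
  · rcases hbc.cases_head with rfl | ⟨d, hbd, -⟩
    exacts [rfl, (hb d hbd).elim]
  · rcases hcb.cases_head with rfl | ⟨d, hcd, -⟩
    exacts [rfl, (hc d hcd).elim]

end Relation

namespace PBRPaper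

open Relation Sum

variable {X Y Z : Type} {X₁ : Set X} {Y₁ : Set Y} {Z₁ : Set Z}
  {α : PBR X Y} {β : PBR Y Z}

/-- `X₁ ∪ (Y ∖ Y₁)`, where the edges of an admissible diagram start. -/
def IsSource (X₁ : Set X) (Y₁ : Set Y) : X ⊕ Y → Prop := Sum.elim (· ∈ X₁) (· ∉ Y₁)

@[simp] lemma isSource_inl {x : X} : IsSource X₁ Y₁ (inl x) ↔ x ∈ X₁ := Iff.rfl

@[simp] lemma isSource_inr {y : Y} : IsSource X₁ Y₁ (inr y) ↔ y ∉ Y₁ := Iff.rfl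

lemma elim_not_mem_mem_iff_not_isSource (s : X ⊕ Y) :
    Sum.elim (· ∉ X₁) (· ∈ Y₁) s ↔ ¬ IsSource X₁ Y₁ s := by
  cases s <;> simp

lemma admissible_iff : Admissible X₁ Y₁ α ↔
    (∀ p ∈ α, IsSource X₁ Y₁ p.1 ∧ ¬ IsSource X₁ Y₁ p.2) ∧
    (∀ a, IsSource X₁ Y₁ a → ∃! b, (a, b) ∈ α) ∧
    (∀ b, ¬ IsSource X₁ Y₁ b → ∃! a, (a, b) ∈ α) := by
  simp only [Admissible, elim_not_mem_mem_iff_not_isSource]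
  constructor
  · rintro ⟨hunique, hedge⟩
    refine ⟨hedge, fun a ha => ?_, fun b hb => ?_⟩
    · obtain ⟨p, ⟨hp, rfl | rfl⟩, hpu⟩ := hunique a
      · exact ⟨p.2, hp, fun b hb => congrArg Prod.snd (hpu _ ⟨hb, Or.inl rfl⟩)⟩
      · exact absurd ha (hedge p hp).2
    · obtain ⟨p, ⟨hp, rfl | rfl⟩, hpu⟩ := hunique b
      · exact absurd (hedge p hp).1 hb
      · exact ⟨p.1, hp, fun a ha => congrArg Prod.fst (hpu _ ⟨ha, Or.inr rfl⟩)⟩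
  · rintro ⟨hedge, hsrc, htgt⟩
    refine ⟨fun s => ?_, hedge⟩
    by_cases hs : IsSource X₁ Y₁ s
    · obtain ⟨b, hb, hbu⟩ := hsrc s hs
      refine ⟨(s, b), ⟨hb, Or.inl rfl⟩, ?_⟩
      rintro ⟨a', b'⟩ ⟨hq, rfl | rfl⟩
      · rw [hbu b' hq]
      · exact absurd hs (hedge _ hq).2
    · obtain ⟨a, ha, hau⟩ := htgt s hs
      refine ⟨(a, s), ⟨ha, Or.inr rfl⟩, ?_⟩
      rintro ⟨a', b'⟩ ⟨hq, rfl | rfl⟩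
      · exact absurd (hedge _ hq).1 hs
      · rw [hau a' hq]

namespace Admissible

variable {p q : (X ⊕ Y) × (X ⊕ Y)}

lemma isSource_fst (hα : Admissible X₁ Y₁ α) (hp : p ∈ α) : IsSource X₁ Y₁ p.1 :=
  ((admissible_iff.1 hα).1 p hp).1

lemma not_isSource_snd (hα : Admissible X₁ Y₁ α) (hp : p ∈ α) : ¬ IsSource X₁ Y₁ p.2 :=
  ((admissible_iff.1 hα).1 p hp).2

lemma existsUnique_of_isSource (hα : Admissible X₁ Y₁ α) {a : X ⊕ Y}
    (ha : IsSource X₁ Y₁ a) : ∃! b, (a, b) ∈ α :=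
  (admissible_iff.1 hα).2.1 a ha

lemma existsUnique_of_not_isSource (hα : Admissible X₁ Y₁ α) {b : X ⊕ Y}
    (hb : ¬ IsSource X₁ Y₁ b) : ∃! a, (a, b) ∈ α :=
  (admissible_iff.1 hα).2.2 b hb

lemma eq_of_fst_eq (hα : Admissible X₁ Y₁ α) (hp : p ∈ α) (hq : q ∈ α) (h : p.1 = q.1) :
    p = q := by
  obtain ⟨a, b⟩ := p
  obtain ⟨a', b'⟩ := q
  obtain rfl : a = a' := h
  rw [(hα.existsUnique_of_isSource (hα.isSource_fst hp)).unique hp hq]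

lemma eq_of_snd_eq (hα : Admissible X₁ Y₁ α) (hp : p ∈ α) (hq : q ∈ α) (h : p.2 = q.2) :
    p = q := by
  obtain ⟨a, b⟩ := p
  obtain ⟨a', b'⟩ := q
  obtain rfl : b = b' := h
  rw [(hα.existsUnique_of_not_isSource (hα.not_isSource_snd hp)).unique hp hq]

end Admissible

lemma ι₀_injective : Function.Injective (ι₀ : X ⊕ Z → X ⊕ Y ⊕ Z) := by
  rintro (x | z) (x' | z') h <;> simp_all [ι₀]

lemma ι₁_injective : Function.Injective (ι₁ : X ⊕ Y → X ⊕ Y ⊕ Z) := by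
  rintro (x | y) (x' | y') h <;> simp_all [ι₁]

lemma ι₂_injective : Function.Injective (ι₂ : Y ⊕ Z → X ⊕ Y ⊕ Z) := by
  rintro (y | z) (y' | z') h <;> simp_all [ι₂]

lemma isSource_iff_not_of_ι₁_eq_ι₂ {u : X ⊕ Y} {w : Y ⊕ Z}
    (h : (ι₁ u : X ⊕ Y ⊕ Z) = ι₂ w) : IsSource X₁ Y₁ u ↔ ¬ IsSource Y₁ Z₁ w := by
  rcases u with x | y <;> rcases w with y' | z <;> simp_all [ι₁, ι₂]

lemma isSource_iff_of_ι₁_eq_ι₀ {u : X ⊕ Y} {a : X ⊕ Z}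
    (h : (ι₁ u : X ⊕ Y ⊕ Z) = ι₀ a) : IsSource X₁ Y₁ u ↔ IsSource X₁ Z₁ a := by
  rcases u with x | y <;> rcases a with x' | z <;> simp_all [ι₁, ι₀]

lemma isSource_iff_of_ι₂_eq_ι₀ {w : Y ⊕ Z} {a : X ⊕ Z}
    (h : (ι₂ w : X ⊕ Y ⊕ Z) = ι₀ a) : IsSource Y₁ Z₁ w ↔ IsSource X₁ Z₁ a := by
  rcases w with y | z <;> rcases a with x | z' <;> simp_all [ι₂, ι₀]

abbrev Edge (X Y Z : Type) : Type := Bool × (X ⊕ Y ⊕ Z) × (X ⊕ Y ⊕ Z)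

lemma edgeMem_iff {e : Edge X Y Z} : EdgeMem α β e ↔
    (∃ p ∈ α, e = (false, ι₁ p.1, ι₁ p.2)) ∨ ∃ p ∈ β, e = (true, ι₂ p.1, ι₂ p.2) := by
  obtain ⟨_ | _, u, v⟩ := e <;> simp [EdgeMem, eq_comm]

namespace EdgeMem

variable {e f : Edge X Y Z}

lemma eq_of_fst_eq (hα : Admissible X₁ Y₁ α) (hβ : Admissible Y₁ Z₁ β)
    (he : EdgeMem α β e) (hf : EdgeMem α β f) (h : e.2.1 = f.2.1) : e = f := by
  rcases edgeMem_iff.1 he with ⟨p, hp, rfl⟩ | ⟨p, hp, rfl⟩ <;>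
    rcases edgeMem_iff.1 hf with ⟨q, hq, rfl⟩ | ⟨q, hq, rfl⟩
  · rw [hα.eq_of_fst_eq hp hq (ι₁_injective h)]
  · exact ((isSource_iff_not_of_ι₁_eq_ι₂ h).1 (hα.isSource_fst hp) (hβ.isSource_fst hq)).elim
  · exact ((isSource_iff_not_of_ι₁_eq_ι₂ h.symm).1 (hα.isSource_fst hq)
      (hβ.isSource_fst hp)).elim
  · rw [hβ.eq_of_fst_eq hp hq (ι₂_injective h)]

lemma eq_of_snd_eq (hα : Admissible X₁ Y₁ α) (hβ : Admissible Y₁ Z₁ β)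
    (he : EdgeMem α β e) (hf : EdgeMem α β f) (h : e.2.2 = f.2.2) : e = f := by
  rcases edgeMem_iff.1 he with ⟨p, hp, rfl⟩ | ⟨p, hp, rfl⟩ <;>
    rcases edgeMem_iff.1 hf with ⟨q, hq, rfl⟩ | ⟨q, hq, rfl⟩
  · rw [hα.eq_of_snd_eq hp hq (ι₁_injective h)]
  · exact (hα.not_isSource_snd hp
      ((isSource_iff_not_of_ι₁_eq_ι₂ h).2 (hβ.not_isSource_snd hq))).elim
  · exact (hα.not_isSource_snd hq
      ((isSource_iff_not_of_ι₁_eq_ι₂ h.symm).2 (hβ.not_isSource_snd hp))).elim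
  · rw [hβ.eq_of_snd_eq hp hq (ι₂_injective h)]

lemma fst_ne_of_snd_eq (hα : Admissible X₁ Y₁ α) (hβ : Admissible Y₁ Z₁ β)
    (he : EdgeMem α β e) (hf : EdgeMem α β f) (h : e.2.2 = f.2.1) : e.1 ≠ f.1 := by
  rcases edgeMem_iff.1 he with ⟨p, hp, rfl⟩ | ⟨p, hp, rfl⟩ <;>
    rcases edgeMem_iff.1 hf with ⟨q, hq, rfl⟩ | ⟨q, hq, rfl⟩
  · exact fun _ => hα.not_isSource_snd hp (ι₁_injective h ▸ hα.isSource_fst hq)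
  · exact Bool.false_ne_true
  · exact Bool.false_ne_true.symm
  · exact fun _ => hβ.not_isSource_snd hp (ι₂_injective h ▸ hβ.isSource_fst hq)

lemma isSource_of_fst_eq (hα : Admissible X₁ Y₁ α) (hβ : Admissible Y₁ Z₁ β)
    (he : EdgeMem α β e) {a : X ⊕ Z} (h : e.2.1 = ι₀ a) : IsSource X₁ Z₁ a := by
  rcases edgeMem_iff.1 he with ⟨p, hp, rfl⟩ | ⟨p, hp, rfl⟩
  · exact (isSource_iff_of_ι₁_eq_ι₀ h).1 (hα.isSource_fst hp)
  · exact (isSource_iff_of_ι₂_eq_ι₀ h).1 (hβ.isSource_fst hp)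

lemma not_isSource_of_snd_eq (hα : Admissible X₁ Y₁ α) (hβ : Admissible Y₁ Z₁ β)
    (he : EdgeMem α β e) {b : X ⊕ Z} (h : e.2.2 = ι₀ b) : ¬ IsSource X₁ Z₁ b := by
  rcases edgeMem_iff.1 he with ⟨p, hp, rfl⟩ | ⟨p, hp, rfl⟩
  · exact (isSource_iff_of_ι₁_eq_ι₀ h).not.1 (hα.not_isSource_snd hp)
  · exact (isSource_iff_of_ι₂_eq_ι₀ h).not.1 (hβ.not_isSource_snd hp)

end EdgeMem

lemma exists_edgeMem_fst_eq (hα : Admissible X₁ Y₁ α) (hβ : Admissible Y₁ Z₁ β)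
    {v : X ⊕ Y ⊕ Z} (hv : ∀ b, v = ι₀ b → IsSource X₁ Z₁ b) :
    ∃ e, EdgeMem α β e ∧ e.2.1 = v := by
  have of_α {u : X ⊕ Y} (hu : IsSource X₁ Y₁ u) : ∃ e, EdgeMem α β e ∧ e.2.1 = ι₁ u :=
    let ⟨b, hb, _⟩ := hα.existsUnique_of_isSource hu
    ⟨_, edgeMem_iff.2 (.inl ⟨(u, b), hb, rfl⟩), rfl⟩
  have of_β {w : Y ⊕ Z} (hw : IsSource Y₁ Z₁ w) : ∃ e, EdgeMem α β e ∧ e.2.1 = ι₂ w :=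
    let ⟨b, hb, _⟩ := hβ.existsUnique_of_isSource hw
    ⟨_, edgeMem_iff.2 (.inr ⟨(w, b), hb, rfl⟩), rfl⟩
  rcases v with x | y | z
  · exact of_α (u := inl x) (hv (inl x) rfl)
  · by_cases hy : y ∈ Y₁
    exacts [of_β (w := inl y) hy, of_α (u := inr y) hy]
  · exact of_β (w := inr z) (hv (inr z) rfl)

lemma exists_edgeMem_snd_eq (hα : Admissible X₁ Y₁ α) (hβ : Admissible Y₁ Z₁ β)
    {v : X ⊕ Y ⊕ Z} (hv : ∀ a, v = ι₀ a → ¬ IsSource X₁ Z₁ a) :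
    ∃ e, EdgeMem α β e ∧ e.2.2 = v := by
  have of_α {u : X ⊕ Y} (hu : ¬ IsSource X₁ Y₁ u) : ∃ e, EdgeMem α β e ∧ e.2.2 = ι₁ u :=
    let ⟨a, ha, _⟩ := hα.existsUnique_of_not_isSource hu
    ⟨_, edgeMem_iff.2 (.inl ⟨(a, u), ha, rfl⟩), rfl⟩
  have of_β {w : Y ⊕ Z} (hw : ¬ IsSource Y₁ Z₁ w) : ∃ e, EdgeMem α β e ∧ e.2.2 = ι₂ w :=
    let ⟨a, ha, _⟩ := hβ.existsUnique_of_not_isSource hw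
    ⟨_, edgeMem_iff.2 (.inr ⟨(a, w), ha, rfl⟩), rfl⟩
  rcases v with x | y | z
  · exact of_α (u := inl x) (hv (inl x) rfl)
  · by_cases hy : y ∈ Y₁
    exacts [of_α (u := inr y) (not_not.2 hy), of_β (w := inl y) hy]
  · exact of_β (w := inr z) (hv (inr z) rfl)

/-- Label alternation is omitted: for admissible pairs it is automatic
(`EdgeMem.fst_ne_of_snd_eq`). -/
def Follows (α : PBR X Y) (β : PBR Y Z) (e f : Edge X Y Z) : Prop :=
  EdgeMem α β e ∧ EdgeMem α β f ∧ e.2.2 = f.2.1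

lemma follows_rightUnique (hα : Admissible X₁ Y₁ α) (hβ : Admissible Y₁ Z₁ β) :
    Relator.RightUnique (Follows α β) := fun _ _ _ hf hg =>
  hf.2.1.eq_of_fst_eq hα hβ hg.2.1 (hf.2.2.symm.trans hg.2.2)

lemma follows_leftUnique (hα : Admissible X₁ Y₁ α) (hβ : Admissible Y₁ Z₁ β) :
    Relator.LeftUnique (Follows α β) := fun _ _ _ he hf =>
  he.1.eq_of_snd_eq hα hβ hf.1 (he.2.2.trans hf.2.2.symm)

lemma edgeMem_iff_of_reflTransGen {e f : Edge X Y Z} (h : ReflTransGen (Follows α β) e f) :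
    EdgeMem α β e ↔ EdgeMem α β f := by
  rcases h.cases_head with rfl | ⟨g, heg, -⟩
  · rfl
  rcases h.cases_tail with rfl | ⟨g', -, hg'f⟩
  · rfl
  exact iff_of_true heg.1 hg'f.2.1

lemma isConnSeq_iff {L : List (Edge X Y Z)} : IsConnSeq α β L ↔
    L ≠ [] ∧ (∀ e ∈ L, EdgeMem α β e) ∧ L.IsChain (fun e f => e.1 ≠ f.1 ∧ e.2.2 = f.2.1) :=
  Iff.rfl

lemma isConnSeq_cons_iff (hα : Admissible X₁ Y₁ α) (hβ : Admissible Y₁ Z₁ β)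
    {e : Edge X Y Z} {l : List (Edge X Y Z)} :
    IsConnSeq α β (e :: l) ↔ EdgeMem α β e ∧ (e :: l).IsChain (Follows α β) := by
  constructor
  · rintro ⟨-, hmem, hchain⟩
    exact ⟨hmem e (by simp), List.IsChain.imp_of_mem_imp
      (fun f g hf hg hfg => ⟨hmem f hf, hmem g hg, hfg.2⟩) hchain⟩
  · rintro ⟨he, hchain⟩
    refine ⟨List.cons_ne_nil e l, hchain.induction _ _ (fun _ _ h _ => h.2.1) (fun _ => he), ?_⟩
    exact hchain.imp fun f g hfg => ⟨hfg.1.fst_ne_of_snd_eq hα hβ hfg.2.1 hfg.2.2, hfg.2.2⟩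

lemma mem_comp_iff (hα : Admissible X₁ Y₁ α) (hβ : Admissible Y₁ Z₁ β) {a b : X ⊕ Z} :
    (a, b) ∈ comp β α ↔ ∃ e f, EdgeMem α β e ∧ e.2.1 = ι₀ a ∧
      ReflTransGen (Follows α β) e f ∧ f.2.2 = ι₀ b := by
  constructor
  · rintro ⟨_ | ⟨e, l⟩, hconn, hhead, hlast⟩
    · exact (hconn.1 rfl).elim
    obtain ⟨he, hchain⟩ := (isConnSeq_cons_iff hα hβ).1 hconn
    refine ⟨e, _, he, by simpa using hhead,
      List.relationReflTransGen_of_exists_isChain_cons l hchain rfl, ?_⟩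
    simpa [List.getLast?_eq_some_getLast] using hlast
  · rintro ⟨e, f, he, hea, hef, hfb⟩
    obtain ⟨l, hchain, hlast⟩ := List.exists_isChain_cons_of_relationReflTransGen hef
    refine ⟨e :: l, (isConnSeq_cons_iff hα hβ).2 ⟨he, hchain⟩, by simpa using hea, ?_⟩
    simp [List.getLast?_eq_some_getLast, hlast, hfb]

lemma forall_not_follows_iff (hα : Admissible X₁ Y₁ α) (hβ : Admissible Y₁ Z₁ β)
    {f : Edge X Y Z} (hf : EdgeMem α β f) : (∀ g, ¬ Follows α β f g) ↔ ∃ b, f.2.2 = ι₀ b := by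
  constructor
  · intro hterm
    by_contra! hinner
    obtain ⟨g, hg, hfg⟩ := exists_edgeMem_fst_eq hα hβ fun b hb => (hinner b hb).elim
    exact hterm g ⟨hf, hg, hfg.symm⟩
  · rintro ⟨b, hb⟩ g ⟨-, hg, hfg⟩
    exact hf.not_isSource_of_snd_eq hα hβ hb (hg.isSource_of_fst_eq hα hβ (hfg ▸ hb))

lemma forall_not_follows_left_iff (hα : Admissible X₁ Y₁ α) (hβ : Admissible Y₁ Z₁ β)
    {e : Edge X Y Z} (he : EdgeMem α β e) : (∀ g, ¬ Follows α β g e) ↔ ∃ a, e.2.1 = ι₀ a := by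
  constructor
  · intro hinit
    by_contra! hinner
    obtain ⟨g, hg, hge⟩ := exists_edgeMem_snd_eq hα hβ fun a ha => (hinner a ha).elim
    exact hinit g ⟨hg, he, hge⟩
  · rintro ⟨a, ha⟩ g ⟨hg, -, hge⟩
    exact hg.not_isSource_of_snd_eq hα hβ (hge.trans ha) (he.isSource_of_fst_eq hα hβ ha)

lemma isSource_and_not_isSource_of_mem_comp (hα : Admissible X₁ Y₁ α) (hβ : Admissible Y₁ Z₁ β)
    {a b : X ⊕ Z} (h : (a, b) ∈ comp β α) : IsSource X₁ Z₁ a ∧ ¬ IsSource X₁ Z₁ b := by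
  obtain ⟨e, f, he, hea, hef, hfb⟩ := (mem_comp_iff hα hβ).1 h
  exact ⟨he.isSource_of_fst_eq hα hβ hea,
    ((edgeMem_iff_of_reflTransGen hef).1 he).not_isSource_of_snd_eq hα hβ hfb⟩

lemma comp_rightUnique (hα : Admissible X₁ Y₁ α) (hβ : Admissible Y₁ Z₁ β) :
    Relator.RightUnique fun a b => (a, b) ∈ comp β α := by
  intro a b b' hb hb'
  obtain ⟨e, f, he, hea, hef, hfb⟩ := (mem_comp_iff hα hβ).1 hb
  obtain ⟨e', f', he', hea', hef', hfb'⟩ := (mem_comp_iff hα hβ).1 hb'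
  obtain rfl := he.eq_of_fst_eq hα hβ he' (hea.trans hea'.symm)
  have terminal {f b} (hef : ReflTransGen (Follows α β) e f) (hfb : f.2.2 = ι₀ b) :=
    (forall_not_follows_iff hα hβ ((edgeMem_iff_of_reflTransGen hef).1 he)).2 ⟨b, hfb⟩
  obtain rfl := eq_of_reflTransGen_of_rightUnique (follows_rightUnique hα hβ) hef hef'
    (terminal hef hfb) (terminal hef' hfb')
  exact ι₀_injective (hfb.symm.trans hfb')

lemma comp_leftUnique (hα : Admissible X₁ Y₁ α) (hβ : Admissible Y₁ Z₁ β) :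
    Relator.LeftUnique fun a b => (a, b) ∈ comp β α := by
  intro a a' b ha ha'
  obtain ⟨e, f, he, hea, hef, hfb⟩ := (mem_comp_iff hα hβ).1 ha
  obtain ⟨e', f', he', hea', hef', hfb'⟩ := (mem_comp_iff hα hβ).1 ha'
  have hf := (edgeMem_iff_of_reflTransGen hef).1 he
  obtain rfl := hf.eq_of_snd_eq hα hβ ((edgeMem_iff_of_reflTransGen hef').1 he')
    (hfb.trans hfb'.symm)
  have initial {e a} (he : EdgeMem α β e) (hea : e.2.1 = ι₀ a) :=
    (forall_not_follows_left_iff hα hβ he).2 ⟨a, hea⟩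
  obtain rfl := eq_of_reflTransGen_of_rightUnique (r := Function.swap (Follows α β))
    (follows_leftUnique hα hβ).flip (reflTransGen_swap.2 hef) (reflTransGen_swap.2 hef')
    (initial he hea) (initial he' hea')
  exact ι₀_injective (hea.symm.trans hea')

section Finite

variable [Finite X] [Finite Y] [Finite Z]

lemma exists_mem_comp_of_isSource (hα : Admissible X₁ Y₁ α) (hβ : Admissible Y₁ Z₁ β)
    {a : X ⊕ Z} (ha : IsSource X₁ Z₁ a) : ∃ b, (a, b) ∈ comp β α := by
  obtain ⟨e, he, hea⟩ := exists_edgeMem_fst_eq hα hβ fun b hb => ι₀_injective hb ▸ ha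
  obtain ⟨f, hef, hf⟩ := exists_reflTransGen_forall_not_of_leftUnique
    (follows_leftUnique hα hβ) ((forall_not_follows_left_iff hα hβ he).2 ⟨a, hea⟩)
  obtain ⟨b, hfb⟩ := (forall_not_follows_iff hα hβ ((edgeMem_iff_of_reflTransGen hef).1 he)).1 hf
  exact ⟨b, (mem_comp_iff hα hβ).2 ⟨e, f, he, hea, hef, hfb⟩⟩

lemma exists_mem_comp_of_not_isSource (hα : Admissible X₁ Y₁ α) (hβ : Admissible Y₁ Z₁ β)
    {b : X ⊕ Z} (hb : ¬ IsSource X₁ Z₁ b) : ∃ a, (a, b) ∈ comp β α := by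
  obtain ⟨f, hf, hfb⟩ := exists_edgeMem_snd_eq hα hβ fun a ha => ι₀_injective ha ▸ hb
  obtain ⟨e, hfe, he⟩ := exists_reflTransGen_forall_not_of_leftUnique
    (r := Function.swap (Follows α β)) (fun _ _ _ h h' => follows_rightUnique hα hβ h h')
    ((forall_not_follows_iff hα hβ hf).2 ⟨b, hfb⟩)
  have hef := reflTransGen_swap.1 hfe
  have he' := (edgeMem_iff_of_reflTransGen hef).2 hf
  obtain ⟨a, hea⟩ := (forall_not_follows_left_iff hα hβ he').1 he
  exact ⟨a, (mem_comp_iff hα hβ).2 ⟨e, f, he', hea, hef, hfb⟩⟩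

theorem comp_admissible (hα : Admissible X₁ Y₁ α) (hβ : Admissible Y₁ Z₁ β) :
    Admissible X₁ Z₁ (comp β α) :=
  admissible_iff.2 ⟨fun _ => isSource_and_not_isSource_of_mem_comp hα hβ,
    fun _ ha => existsUnique_of_exists_of_unique (exists_mem_comp_of_isSource hα hβ ha)
      fun _ _ hb hb' => comp_rightUnique hα hβ hb hb',
    fun _ hb => existsUnique_of_exists_of_unique (exists_mem_comp_of_not_isSource hα hβ hb)
      fun _ _ ha ha' => comp_leftUnique hα hβ ha ha'⟩

end Finite

theorem epsCheck_admissible (X₁ : Set X) : Admissible X₁ X₁ (epsCheck X₁) := by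
  refine admissible_iff.2 ⟨?_, ?_, ?_⟩
  · rintro p ⟨x, ⟨hx, rfl⟩ | ⟨hx, rfl⟩⟩ <;> simp [hx]
  · rintro (x | x) hx <;> simp_all [epsCheck]
  · rintro (x | x) hx <;> simp_all [epsCheck]

lemma exists_connectsVia_epsCheck_left (hα : Admissible X₁ Y₁ α) {p : (X ⊕ Y) × (X ⊕ Y)}
    (hp : p ∈ α) : ∃ L, ConnectsVia (epsCheck X₁) α L p.1 p.2 ∧
      (true, (ι₂ p.1, ι₂ p.2)) ∈ L ∧
      (∀ x, p.1 = inl x → (false, (inl x, inr (inl x))) ∈ L) ∧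
      (∀ x, p.2 = inl x → (false, (inr (inl x), inl x)) ∈ L) := by
  have hs := hα.isSource_fst hp
  have ht := hα.not_isSource_snd hp
  rcases p with ⟨x | y, x' | y'⟩
  · refine ⟨[(false, (inl x, inr (inl x))), (true, (inr (inl x), inr (inl x'))),
      (false, (inr (inl x'), inl x'))], ?_⟩
    simp_all [ConnectsVia, isConnSeq_iff, EdgeMem, epsCheck, ι₁, ι₂, ι₀]
  · refine ⟨[(false, (inl x, inr (inl x))), (true, (inr (inl x), inr (inr y')))], ?_⟩
    simp_all [ConnectsVia, isConnSeq_iff, EdgeMem, epsCheck, ι₁, ι₂, ι₀]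
  · refine ⟨[(true, (inr (inr y), inr (inl x'))), (false, (inr (inl x'), inl x'))], ?_⟩
    simp_all [ConnectsVia, isConnSeq_iff, EdgeMem, epsCheck, ι₁, ι₂, ι₀]
  · refine ⟨[(true, (inr (inr y), inr (inr y')))], ?_⟩
    simp_all [ConnectsVia, isConnSeq_iff, EdgeMem, epsCheck, ι₂, ι₀]

lemma exists_connectsVia_epsCheck_right (hα : Admissible X₁ Y₁ α) {p : (X ⊕ Y) × (X ⊕ Y)}
    (hp : p ∈ α) : ∃ L, ConnectsVia α (epsCheck Y₁) L p.1 p.2 ∧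
      (false, (ι₁ p.1, ι₁ p.2)) ∈ L ∧
      (∀ y, p.1 = inr y → (true, (inr (inr y), inr (inl y))) ∈ L) ∧
      (∀ y, p.2 = inr y → (true, (inr (inl y), inr (inr y))) ∈ L) := by
  have hs := hα.isSource_fst hp
  have ht := hα.not_isSource_snd hp
  rcases p with ⟨x | y, x' | y'⟩
  · refine ⟨[(false, (inl x, inl x'))], ?_⟩
    simp_all [ConnectsVia, isConnSeq_iff, EdgeMem, epsCheck, ι₁, ι₀]
  · refine ⟨[(false, (inl x, inr (inl y'))), (true, (inr (inl y'), inr (inr y')))], ?_⟩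
    simp_all [ConnectsVia, isConnSeq_iff, EdgeMem, epsCheck, ι₁, ι₂, ι₀]
  · refine ⟨[(true, (inr (inr y), inr (inl y))), (false, (inr (inl y), inl x'))], ?_⟩
    simp_all [ConnectsVia, isConnSeq_iff, EdgeMem, epsCheck, ι₁, ι₂, ι₀]
  · refine ⟨[(true, (inr (inr y), inr (inl y))), (false, (inr (inl y), inr (inl y'))),
      (true, (inr (inl y'), inr (inr y')))], ?_⟩
    simp_all [ConnectsVia, isConnSeq_iff, EdgeMem, epsCheck, ι₁, ι₂, ι₀]

lemma comp_eq_of_subset {γ : PBR X Z} (hγ : Admissible X₁ Z₁ γ) (hα : Admissible X₁ Y₁ α)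
    (hβ : Admissible Y₁ Z₁ β) (h : γ ⊆ comp β α) : comp β α = γ := by
  refine Set.Subset.antisymm (fun ⟨a, b⟩ hab => ?_) h
  obtain ⟨b', hb', -⟩ :=
    hγ.existsUnique_of_isSource (isSource_and_not_isSource_of_mem_comp hα hβ hab).1
  rwa [comp_rightUnique hα hβ hab (h hb')]

theorem comp_epsCheck (hα : Admissible X₁ Y₁ α) : comp α (epsCheck X₁) = α :=
  comp_eq_of_subset hα (epsCheck_admissible X₁) hα fun _ hp =>
    let ⟨L, hL, _⟩ := exists_connectsVia_epsCheck_left hα hp; ⟨L, hL⟩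

theorem epsCheck_comp (hα : Admissible X₁ Y₁ α) : comp (epsCheck Y₁) α = α :=
  comp_eq_of_subset hα hα (epsCheck_admissible Y₁) fun _ hp =>
    let ⟨L, hL, _⟩ := exists_connectsVia_epsCheck_right hα hp; ⟨L, hL⟩

lemma fPBR_eq_zero_of_forall_edgeMem
    (h : ∀ e, EdgeMem α β e → ∃ L a b, ConnectsVia α β L a b ∧ e ∈ L) : fPBR α β = 0 := by
  have : IsEmpty (FrothyCycles α β) := by
    constructor
    rintro ⟨L, hconn, -, -, -, hfrothy⟩
    obtain ⟨e, he⟩ := List.exists_mem_of_ne_nil L hconn.1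
    obtain ⟨hem, hnot⟩ := hfrothy e he
    obtain ⟨L', a, b, hL', heL'⟩ := h e hem
    exact hnot L' a b hL' heL'
  exact Nat.card_of_isEmpty

theorem fPBR_epsCheck_left (hα : Admissible X₁ Y₁ α) : fPBR (epsCheck X₁) α = 0 := by
  refine fPBR_eq_zero_of_forall_edgeMem fun e he => ?_
  rcases edgeMem_iff.1 he with ⟨_, ⟨x, ⟨hx, rfl⟩ | ⟨hx, rfl⟩⟩, rfl⟩ | ⟨p, hp, rfl⟩
  · obtain ⟨b, hb, -⟩ := hα.existsUnique_of_isSource (a := inl x) hx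
    obtain ⟨L, hL, -, hmem, -⟩ := exists_connectsVia_epsCheck_left hα hb
    exact ⟨L, _, _, hL, hmem x rfl⟩
  · obtain ⟨a, ha, -⟩ := hα.existsUnique_of_not_isSource (b := inl x) hx
    obtain ⟨L, hL, -, -, hmem⟩ := exists_connectsVia_epsCheck_left hα ha
    exact ⟨L, _, _, hL, hmem x rfl⟩
  · obtain ⟨L, hL, hmem, -⟩ := exists_connectsVia_epsCheck_left hα hp
    exact ⟨L, _, _, hL, hmem⟩

theorem fPBR_epsCheck_right (hα : Admissible X₁ Y₁ α) : fPBR α (epsCheck Y₁) = 0 := by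
  refine fPBR_eq_zero_of_forall_edgeMem fun e he => ?_
  rcases edgeMem_iff.1 he with ⟨p, hp, rfl⟩ | ⟨_, ⟨y, ⟨hy, rfl⟩ | ⟨hy, rfl⟩⟩, rfl⟩
  · obtain ⟨L, hL, hmem, -⟩ := exists_connectsVia_epsCheck_right hα hp
    exact ⟨L, _, _, hL, hmem⟩
  · obtain ⟨a, ha, -⟩ := hα.existsUnique_of_not_isSource (b := inr y) (not_not.2 hy)
    obtain ⟨L, hL, -, -, hmem⟩ := exists_connectsVia_epsCheck_right hα ha
    exact ⟨L, _, _, hL, hmem y rfl⟩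
  · obtain ⟨b, hb, -⟩ := hα.existsUnique_of_isSource (a := inr y) hy
    obtain ⟨L, hL, -, hmem, -⟩ := exists_connectsVia_epsCheck_right hα hb
    exact ⟨L, _, _, hL, hmem y rfl⟩

/-- Admissible oriented Brauer diagrams are closed under composition, the
diagrams `ε̌` are admissible two-sided identities with `𝔣((ε̌,α)) = 0 = 𝔣((α,ε̌))`;
hence admissible oriented Brauer diagrams paired with elements of `ℕ₀`, under
the deformed composition `(β,m)⋄(α,k) = (β∘α, m+k+𝔣((α,β)))`, form the
oriented Brauer category. -/
theorem oriented_brauer_category :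
    (∀ (X₂ Y₂ Z₂ : Type) [Fintype X₂] [Fintype Y₂] [Fintype Z₂]
      (X₁ : Set X₂) (Y₁ : Set Y₂) (Z₁ : Set Z₂) (α : PBR X₂ Y₂) (β : PBR Y₂ Z₂),
      Admissible X₁ Y₁ α → Admissible Y₁ Z₁ β → Admissible X₁ Z₁ (comp β α)) ∧
    (∀ (X₂ : Type) [Fintype X₂] (X₁ : Set X₂),
      Admissible X₁ X₁ (epsCheck X₁)) ∧
    (∀ (X₂ Y₂ : Type) [Fintype X₂] [Fintype Y₂]
      (X₁ : Set X₂) (Y₁ : Set Y₂) (α : PBR X₂ Y₂), Admissible X₁ Y₁ α →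
      comp α (epsCheck X₁) = α ∧ comp (epsCheck Y₁) α = α ∧
      fPBR (epsCheck X₁) α = 0 ∧ fPBR α (epsCheck Y₁) = 0) :=
  ⟨fun _ _ _ _ _ _ _ _ _ _ _ hα hβ => comp_admissible hα hβ,
    fun _ _ => epsCheck_admissible,
    fun _ _ _ _ _ _ _ hα =>
      ⟨comp_epsCheck hα, epsCheck_comp hα, fPBR_epsCheck_left hα, fPBR_epsCheck_right hα⟩⟩

end PBRPaper
end
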